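/- For any two density matrices ρ and σ on a finite-dimensional Hilbert space, S(ρ‖σ) ≥ 1 - F(ρ,σ), i.e., the quantum relative entropy (in bits, base-2 logarithm) is at least the squared Bures distance K(ρ,σ). -/

import Mathlib

open scoped ComplexOrder

/-- The positive semidefinite square root of a positive semidefinite matrix
(the definition `Matrix.PosSemidef.sqrt` of the older Mathlib, since removed). -/
noncomputable def Matrix.PosSemidef.sqrt {n 𝕜 : Type*} [Fintype n] [DecidableEq n] [RCLike 𝕜]
    {A : Matrix n n 𝕜} (hA : A.PosSemidef) : Matrix n n 𝕜 :=
  hA.1.eigenvectorUnitary.1 * Matrix.diagonal ((↑) ∘ (√·) ∘ hA.1.eigenvalues) *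
    (star hA.1.eigenvectorUnitary : Matrix n n 𝕜)

open Classical in
/-- Fidelity `F(ρ,σ) = tr √(ρ^{1/2} σ ρ^{1/2})` of positive semidefinite matrices
(junk value `0` if the arguments are not positive semidefinite). -/
noncomputable def fid {n : Type*} [Fintype n] [DecidableEq n]
    (ρ σ : Matrix n n ℂ) : ℝ :=
  if hρ : ρ.PosSemidef then
    if hm : (hρ.sqrt * σ * hρ.sqrt).PosSemidef then hm.sqrt.trace.re else 0
  else 0

/-- Apply a real function to a Hermitian matrix via its spectral decomposition. -/
noncomputable def matFun {d : ℕ} (f : ℝ → ℝ) {A : Matrix (Fin d) (Fin d) ℂ}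
    (hA : A.IsHermitian) : Matrix (Fin d) (Fin d) ℂ :=
  (hA.eigenvectorUnitary : Matrix (Fin d) (Fin d) ℂ) *
    Matrix.diagonal (fun i => (f (hA.eigenvalues i) : ℂ)) *
    (star hA.eigenvectorUnitary : Matrix (Fin d) (Fin d) ℂ)

open Classical in
/-- Quantum relative entropy `S(ρ‖σ) = tr(ρ (log₂ ρ - log₂ σ))` (base-2 logarithm),
valued in the extended reals: it is `⊤` when the support of `ρ` is not contained
in the support of `σ`. -/
noncomputable def relEnt {d : ℕ} {ρ σ : Matrix (Fin d) (Fin d) ℂ}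
    (hρ : ρ.IsHermitian) (hσ : σ.IsHermitian) : EReal :=
  if ∀ v : Fin d → ℂ, σ.mulVec v = 0 → ρ.mulVec v = 0 then
    (((ρ * (matFun (Real.logb 2) hρ - matFun (Real.logb 2) hσ)).trace.re : ℝ) : EReal)
  else ⊤

section Aux

lemma Matrix.PosSemidef.posSemidef_sqrt {n : Type*} [Fintype n] [DecidableEq n]
    {A : Matrix n n ℂ} (hA : A.PosSemidef) : hA.sqrt.PosSemidef := by
  have hD : (Matrix.diagonal (((↑) ∘ (√·) ∘ hA.1.eigenvalues) : n → ℂ)).PosSemidef := by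
    rw [Matrix.posSemidef_diagonal_iff]
    intro i
    simp only [Function.comp_apply]
    exact_mod_cast Real.sqrt_nonneg _
  have h := hD.mul_mul_conjTranspose_same (hA.1.eigenvectorUnitary : Matrix n n ℂ)
  rw [← Matrix.star_eq_conjTranspose] at h
  exact h

lemma Matrix.PosSemidef.sqrt_mul_self {n : Type*} [Fintype n] [DecidableEq n]
    {A : Matrix n n ℂ} (hA : A.PosSemidef) : hA.sqrt * hA.sqrt = A := by
  have hU : star (hA.1.eigenvectorUnitary : Matrix n n ℂ) *
      (hA.1.eigenvectorUnitary : Matrix n n ℂ) = 1 :=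
    Matrix.mem_unitaryGroup_iff'.mp hA.1.eigenvectorUnitary.2
  conv_rhs => rw [hA.1.spectral_theorem]
  simp only [Matrix.PosSemidef.sqrt]
  rw [show ∀ X D E Y : Matrix n n ℂ, X * D * Y * (X * E * Y) = X * (D * (Y * X) * E) * Y by
    intro X D E Y; simp only [Matrix.mul_assoc]]
  rw [hU, Matrix.mul_one, Matrix.diagonal_mul_diagonal]
  congr 2
  congr 1
  funext i
  simp only [Function.comp_apply]
  rw [← RCLike.ofReal_mul, Real.mul_self_sqrt (hA.eigenvalues_nonneg i)]

open Matrix Finset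

variable {d : ℕ}

private lemma trace_form' (U V : Matrix (Fin d) (Fin d) ℂ) (a b : Fin d → ℝ) :
    (U * Matrix.diagonal (fun i => (a i : ℂ)) * star U *
      (V * Matrix.diagonal (fun j => (b j : ℂ)) * star V)).trace
      = ∑ i, ∑ j, ((a i * b j * Complex.normSq ((star U * V) i j) : ℝ) : ℂ) := by
  set W := star U * V with hW
  have h1 : U * Matrix.diagonal (fun i => (a i : ℂ)) * star U *
      (V * Matrix.diagonal (fun j => (b j : ℂ)) * star V)
      = U * (Matrix.diagonal (fun i => (a i : ℂ)) * (star U * V) *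
        Matrix.diagonal (fun j => (b j : ℂ)) * star V) := by
    simp only [Matrix.mul_assoc]
  rw [h1, Matrix.trace_mul_comm]
  have h2 : Matrix.diagonal (fun i => (a i : ℂ)) * W *
        Matrix.diagonal (fun j => (b j : ℂ)) * star V * U
      = Matrix.diagonal (fun i => (a i : ℂ)) * W *
        Matrix.diagonal (fun j => (b j : ℂ)) * star W := by
    simp only [hW, Matrix.star_mul, star_star, Matrix.mul_assoc]
  rw [h2, Matrix.trace]
  have h3 : ∀ i j, (Matrix.diagonal (fun i => (a i : ℂ)) * W *
      Matrix.diagonal (fun j => (b j : ℂ))) i j = (a i : ℂ) * W i j * (b j : ℂ) := by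
    intro i j
    simp [Matrix.mul_diagonal, Matrix.diagonal_mul]
  refine Finset.sum_congr rfl fun i _ => ?_
  rw [Matrix.diag_apply, Matrix.mul_apply]
  refine Finset.sum_congr rfl fun j _ => ?_
  rw [h3, Matrix.star_apply,
    show (a i : ℂ) * W i j * (b j : ℂ) * star (W i j)
      = (a i : ℂ) * (b j : ℂ) * (W i j * (starRingEnd ℂ) (W i j)) from by
        rw [Complex.star_def]; ring, Complex.mul_conj]
  push_cast
  ring

private lemma trace_form_re (U V : Matrix (Fin d) (Fin d) ℂ) (a b : Fin d → ℝ) :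
    (U * Matrix.diagonal (fun i => (a i : ℂ)) * star U *
      (V * Matrix.diagonal (fun j => (b j : ℂ)) * star V)).trace.re
      = ∑ i, ∑ j, a i * b j * Complex.normSq ((star U * V) i j) := by
  rw [trace_form', Complex.re_sum]
  refine Finset.sum_congr rfl fun i _ => ?_
  rw [Complex.re_sum]
  exact Finset.sum_congr rfl fun j _ => Complex.ofReal_re _

private lemma scalar_ineq (p q c : ℝ) (hp : 0 ≤ p) (hq : 0 ≤ q) (hc : 0 ≤ c)
    (hpq : q = 0 → c * p = 0) :
    c * (2 * p - 2 * Real.sqrt (p * q)) ≤ c * (p * (Real.log p - Real.log q)) := by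
  rcases eq_or_lt_of_le hc with hc0 | hc0
  · simp [← hc0]
  rcases eq_or_lt_of_le hp with hp0 | hp0
  · simp [← hp0]
  rcases eq_or_lt_of_le hq with hq0 | hq0
  · exfalso
    have := hpq hq0.symm
    nlinarith
  apply mul_le_mul_of_nonneg_left _ hc
  have hx : 0 < Real.sqrt (q / p) := Real.sqrt_pos.mpr (div_pos hq0 hp0)
  have hlog := Real.log_le_sub_one_of_pos hx
  have hls : Real.log (Real.sqrt (q / p)) = (Real.log q - Real.log p) / 2 := by
    rw [Real.log_sqrt (div_nonneg hq0.le hp0.le), Real.log_div hq0.ne' hp0.ne']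
  have hsq : Real.sqrt (p * q) = p * Real.sqrt (q / p) := by
    rw [show p * q = p ^ 2 * (q / p) by field_simp, Real.sqrt_mul (sq_nonneg p),
      Real.sqrt_sq hp0.le]
  rw [hls] at hlog
  nlinarith

private lemma unit_mul (A : Matrix (Fin d) (Fin d) ℂ) (hA : A.IsHermitian) :
    star (hA.eigenvectorUnitary : Matrix (Fin d) (Fin d) ℂ) *
      (hA.eigenvectorUnitary : Matrix (Fin d) (Fin d) ℂ) = 1 :=
  Matrix.mem_unitaryGroup_iff'.mp hA.eigenvectorUnitary.2

private lemma mul_unit (A : Matrix (Fin d) (Fin d) ℂ) (hA : A.IsHermitian) :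
    (hA.eigenvectorUnitary : Matrix (Fin d) (Fin d) ℂ) *
      star (hA.eigenvectorUnitary : Matrix (Fin d) (Fin d) ℂ) = 1 :=
  Matrix.mem_unitaryGroup_iff.mp hA.eigenvectorUnitary.2

private lemma trace_conj_eq (T D : Matrix (Fin d) (Fin d) ℂ) (hT : star T * T = 1) :
    (T * D * star T).trace = D.trace := by
  rw [Matrix.trace_mul_comm, ← Matrix.mul_assoc, hT, one_mul]

private lemma sqrt_trace_re {M : Matrix (Fin d) (Fin d) ℂ} (hM : M.PosSemidef) :
    hM.sqrt.trace.re = ∑ k, Real.sqrt (hM.1.eigenvalues k) := by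
  have h : hM.sqrt = (hM.1.eigenvectorUnitary : Matrix (Fin d) (Fin d) ℂ) *
      Matrix.diagonal ((↑) ∘ Real.sqrt ∘ hM.1.eigenvalues) *
      star (hM.1.eigenvectorUnitary : Matrix (Fin d) (Fin d) ℂ) := rfl
  rw [h, trace_conj_eq _ _ (unit_mul M hM.1), Matrix.trace_diagonal]
  rw [Complex.re_sum]
  exact Finset.sum_congr rfl fun k _ => by simp

private lemma re_trace_le (X M : Matrix (Fin d) (Fin d) ℂ) (hM : M.PosSemidef)
    (hMX : M = star X * X) :
    X.trace.re ≤ ∑ k, Real.sqrt (hM.1.eigenvalues k) := by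
  set T : Matrix (Fin d) (Fin d) ℂ := (hM.1.eigenvectorUnitary : Matrix (Fin d) (Fin d) ℂ)
    with hT
  set Y : Matrix (Fin d) (Fin d) ℂ := star T * X * T with hY
  set μ : Fin d → ℝ := hM.1.eigenvalues with hμ
  have hT1 : T * star T = 1 := mul_unit M hM.1
  have hT2 : star T * T = 1 := unit_mul M hM.1
  have htr : X.trace = Y.trace := by
    rw [hY, Matrix.trace_mul_comm, ← Matrix.mul_assoc, hT1, one_mul]
  have hYY : star Y * Y = Matrix.diagonal (fun k => (μ k : ℂ)) := by
    have h1 : star Y = star T * star X * T := by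
      rw [hY, Matrix.star_mul, Matrix.star_mul, star_star, Matrix.mul_assoc]
    have h2 : star Y * Y = star T * M * T := by
      rw [h1, hY, hMX]
      calc star T * star X * T * (star T * X * T)
          = star T * star X * ((T * star T) * (X * T)) := by simp only [Matrix.mul_assoc]
        _ = star T * (star X * X) * T := by rw [hT1, Matrix.one_mul]; simp only [Matrix.mul_assoc]
    rw [h2]
    have h3 : M = T * Matrix.diagonal (fun k => (μ k : ℂ)) * star T := hM.1.spectral_theorem
    rw [h3]
    calc star T * (T * Matrix.diagonal (fun k => (μ k : ℂ)) * star T) * T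
        = (star T * T) * Matrix.diagonal (fun k => (μ k : ℂ)) * (star T * T) := by
          simp only [Matrix.mul_assoc]
      _ = Matrix.diagonal (fun k => (μ k : ℂ)) := by rw [hT2]; simp
  have hcol : ∀ k, ∑ i, Complex.normSq (Y i k) = μ k := by
    intro k
    have := congrFun (congrFun hYY k) k
    rw [Matrix.mul_apply] at this
    have h4 : ∀ i, (star Y) k i * Y i k = (Complex.normSq (Y i k) : ℂ) := by
      intro i
      rw [Matrix.star_apply, Complex.star_def, mul_comm, Complex.mul_conj]
    simp only [h4] at this
    have h5 := congrArg Complex.re this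
    rw [Complex.re_sum] at h5
    simpa using h5
  rw [htr, Matrix.trace]
  rw [show (∑ k, Y.diag k).re = ∑ k, (Y k k).re by rw [Complex.re_sum]; rfl]
  apply Finset.sum_le_sum
  intro k _
  calc (Y k k).re ≤ ‖Y k k‖ := Complex.re_le_norm _
    _ = Real.sqrt (Complex.normSq (Y k k)) := Complex.norm_def _
    _ ≤ Real.sqrt (μ k) := by
        rw [← hcol k]
        have hb : Complex.normSq (Y k k) ≤ ∑ i, Complex.normSq (Y i k) :=
          Finset.single_le_sum (f := fun i => Complex.normSq (Y i k))
            (fun i _ => Complex.normSq_nonneg _) (Finset.mem_univ k)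
        exact Real.sqrt_le_sqrt hb

end Aux

theorem stmt13 (d : ℕ) (ρ σ : Matrix (Fin d) (Fin d) ℂ)
    (hρ : ρ.PosSemidef) (hσ : σ.PosSemidef)
    (htρ : ρ.trace = 1) (htσ : σ.trace = 1) :
    ((1 - fid ρ σ : ℝ) : EReal) ≤ relEnt hρ.1 hσ.1 := by
  classical
  rw [relEnt]
  split_ifs with hsupp
  swap
  · exact le_top
  rw [EReal.coe_le_coe_iff]
  set f : ℝ → ℝ := Real.logb 2 with hf
  set U : Matrix (Fin d) (Fin d) ℂ := (hρ.1.eigenvectorUnitary : Matrix (Fin d) (Fin d) ℂ)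
    with hUdef
  set V : Matrix (Fin d) (Fin d) ℂ := (hσ.1.eigenvectorUnitary : Matrix (Fin d) (Fin d) ℂ)
    with hVdef
  set p : Fin d → ℝ := hρ.1.eigenvalues with hpdef
  set q : Fin d → ℝ := hσ.1.eigenvalues with hqdef
  set W : Matrix (Fin d) (Fin d) ℂ := star U * V with hWdef
  set c : Fin d → Fin d → ℝ := fun i j => Complex.normSq (W i j) with hcdef
  have hU1 : U * star U = 1 := mul_unit ρ hρ.1
  have hU2 : star U * U = 1 := unit_mul ρ hρ.1
  have hV1 : V * star V = 1 := mul_unit σ hσ.1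
  have hV2 : star V * V = 1 := unit_mul σ hσ.1
  have hρspec : ρ = U * Matrix.diagonal (fun i => (p i : ℂ)) * star U := hρ.1.spectral_theorem
  have hσspec : σ = V * Matrix.diagonal (fun i => (q i : ℂ)) * star V := hσ.1.spectral_theorem
  have hW1 : W * star W = 1 := by
    rw [hWdef, Matrix.star_mul, star_star]
    calc star U * V * (star V * U) = star U * ((V * star V) * U) := by
          simp only [Matrix.mul_assoc]
      _ = 1 := by rw [hV1, Matrix.one_mul, hU2]
  have hW2 : star W * W = 1 := by
    rw [hWdef, Matrix.star_mul, star_star]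
    calc star V * U * (star U * V) = star V * ((U * star U) * V) := by
          simp only [Matrix.mul_assoc]
      _ = 1 := by rw [hU1, Matrix.one_mul, hV2]
  have hcnn : ∀ i j, 0 ≤ c i j := fun i j => Complex.normSq_nonneg _
  have hrow : ∀ i, ∑ j, c i j = 1 := by
    intro i
    have h := congrFun (congrFun hW1 i) i
    rw [Matrix.mul_apply] at h
    have h4 : ∀ j, W i j * (star W) j i = (c i j : ℂ) := by
      intro j
      rw [Matrix.star_apply, Complex.star_def, Complex.mul_conj]
    simp only [h4] at h
    have h5 := congrArg Complex.re h
    rw [Complex.re_sum] at h5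
    simpa using h5
  have hcol : ∀ j, ∑ i, c i j = 1 := by
    intro j
    have h := congrFun (congrFun hW2 j) j
    rw [Matrix.mul_apply] at h
    have h4 : ∀ i, (star W) j i * W i j = (c i j : ℂ) := by
      intro i
      rw [Matrix.star_apply, Complex.star_def, mul_comm, Complex.mul_conj]
    simp only [h4] at h
    have h5 := congrArg Complex.re h
    rw [Complex.re_sum] at h5
    simpa using h5
  have hp : ∀ i, 0 ≤ p i := fun i => hρ.eigenvalues_nonneg i
  have hq : ∀ i, 0 ≤ q i := fun i => hσ.eigenvalues_nonneg i
  have hps : ∑ i, p i = 1 := by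
    have h : (U * Matrix.diagonal (fun i => (p i : ℂ)) * star U).trace = 1 := by
      rw [← hρspec]; exact htρ
    rw [trace_conj_eq _ _ hU2, Matrix.trace_diagonal] at h
    have h5 := congrArg Complex.re h
    rw [Complex.re_sum] at h5
    simpa using h5
  have hqs : ∑ i, q i = 1 := by
    have h : (V * Matrix.diagonal (fun i => (q i : ℂ)) * star V).trace = 1 := by
      rw [← hσspec]; exact htσ
    rw [trace_conj_eq _ _ hV2, Matrix.trace_diagonal] at h
    have h5 := congrArg Complex.re h
    rw [Complex.re_sum] at h5
    simpa using h5
  -- support condition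
  have hsupp0 : ∀ j, q j = 0 → ∀ i, p i * c i j = 0 := by
    intro j hqj i
    have hσV : σ * V = V * Matrix.diagonal (fun k => (q k : ℂ)) := by
      conv_lhs => rw [hσspec]
      calc V * Matrix.diagonal (fun k => (q k : ℂ)) * star V * V
          = V * Matrix.diagonal (fun k => (q k : ℂ)) * (star V * V) := by
            simp only [Matrix.mul_assoc]
        _ = V * Matrix.diagonal (fun k => (q k : ℂ)) := by rw [hV2, Matrix.mul_one]
    have hv : σ.mulVec (fun k => V k j) = 0 := by
      funext k
      have h5 : σ.mulVec (fun k => V k j) k = (σ * V) k j := by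
        simp [Matrix.mulVec, dotProduct, Matrix.mul_apply]
      rw [h5, hσV, Matrix.mul_diagonal]
      simp [hqj]
    have hρv := hsupp _ hv
    have hρVj : ∀ l, (ρ * V) l j = 0 := by
      intro l
      have h6 : (ρ * V) l j = ρ.mulVec (fun k => V k j) l := by
        simp [Matrix.mulVec, dotProduct, Matrix.mul_apply]
      rw [h6, hρv]
      rfl
    have hDW : (p i : ℂ) * W i j = 0 := by
      have h7 : star U * (ρ * V) = Matrix.diagonal (fun k => (p k : ℂ)) * W := by
        conv_lhs => rw [hρspec]
        calc star U * (U * Matrix.diagonal (fun k => (p k : ℂ)) * star U * V)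
            = (star U * U) * (Matrix.diagonal (fun k => (p k : ℂ)) * (star U * V)) := by
              simp only [Matrix.mul_assoc]
          _ = Matrix.diagonal (fun k => (p k : ℂ)) * W := by
              rw [hU2, Matrix.one_mul, hWdef]
      have h6 : (Matrix.diagonal (fun k => (p k : ℂ)) * W) i j = 0 := by
        rw [← h7, Matrix.mul_apply]
        exact Finset.sum_eq_zero fun l _ => by rw [hρVj l, mul_zero]
      rwa [Matrix.diagonal_mul] at h6
    rcases mul_eq_zero.mp hDW with h | h
    · have h' : p i = 0 := by exact_mod_cast h
      rw [h', zero_mul]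
    · have h' : c i j = 0 := by rw [hcdef]; simp [h]
      rw [h', mul_zero]
  -- trace computations
  have hsplit : (ρ * (matFun f hρ.1 - matFun f hσ.1)).trace.re
      = (ρ * matFun f hρ.1).trace.re - (ρ * matFun f hσ.1).trace.re := by
    rw [Matrix.mul_sub, Matrix.trace_sub, Complex.sub_re]
  have hTe1 : (ρ * matFun f hρ.1).trace.re = ∑ i, p i * f (p i) := by
    have e : ρ * matFun f hρ.1
        = U * Matrix.diagonal (fun i => (p i : ℂ)) * star U *
          (U * Matrix.diagonal (fun i => (f (p i) : ℂ)) * star U) := by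
      rw [← hρspec]; rfl
    rw [e, trace_form_re U U p (fun i => f (p i)), hU2]
    refine Finset.sum_congr rfl fun i _ => ?_
    rw [Finset.sum_eq_single i]
    · rw [Matrix.one_apply_eq]
      simp
    · intro j _ hj
      rw [Matrix.one_apply_ne (Ne.symm hj)]
      simp
    · simp
  have hTe2 : (ρ * matFun f hσ.1).trace.re = ∑ i, ∑ j, p i * f (q j) * c i j := by
    have e : ρ * matFun f hσ.1
        = U * Matrix.diagonal (fun i => (p i : ℂ)) * star U *
          (V * Matrix.diagonal (fun i => (f (q i) : ℂ)) * star V) := by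
      rw [← hρspec]; rfl
    rw [e, trace_form_re U V p (fun i => f (q i))]
  set H : ℝ := ∑ i, ∑ j, c i j * Real.sqrt (p i * q j) with hHdef
  set Dn : ℝ := ∑ i, ∑ j, c i j * (p i * (Real.log (p i) - Real.log (q j))) with hDndef
  -- Step: 2 - 2H ≤ Dn
  have hS2 : 2 - 2 * H ≤ Dn := by
    have hsum : ∑ i, ∑ j, c i j * (2 * p i - 2 * Real.sqrt (p i * q j)) ≤ Dn := by
      refine Finset.sum_le_sum fun i _ => Finset.sum_le_sum fun j _ => ?_
      exact scalar_ineq (p i) (q j) (c i j) (hp i) (hq j) (hcnn i j)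
        (fun h => by rw [mul_comm]; exact hsupp0 j h i)
    have hL : ∑ i, ∑ j, c i j * (2 * p i - 2 * Real.sqrt (p i * q j)) = 2 - 2 * H := by
      have h8 : ∀ i, ∑ j, c i j * (2 * p i - 2 * Real.sqrt (p i * q j))
          = 2 * p i - 2 * ∑ j, c i j * Real.sqrt (p i * q j) := by
        intro i
        have h9 : ∀ j, c i j * (2 * p i - 2 * Real.sqrt (p i * q j))
            = 2 * p i * c i j - 2 * (c i j * Real.sqrt (p i * q j)) := fun j => by ring
        rw [Finset.sum_congr rfl (fun j _ => h9 j), Finset.sum_sub_distrib,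
          ← Finset.mul_sum, ← Finset.mul_sum, hrow i, mul_one]
      rw [Finset.sum_congr rfl (fun i _ => h8 i), Finset.sum_sub_distrib,
        ← Finset.mul_sum, ← Finset.mul_sum, hps, mul_one]
    linarith [hsum, hL.ge, hL.le]
  -- Step: H ≤ 1
  have hS3 : H ≤ 1 := by
    have hterm : ∀ i j, c i j * Real.sqrt (p i * q j) ≤ c i j * ((p i + q j) / 2) := by
      intro i j
      apply mul_le_mul_of_nonneg_left _ (hcnn i j)
      rw [Real.sqrt_mul (hp i)]
      nlinarith [sq_nonneg (Real.sqrt (p i) - Real.sqrt (q j)), Real.sq_sqrt (hp i),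
        Real.sq_sqrt (hq j), Real.sqrt_nonneg (p i), Real.sqrt_nonneg (q j)]
    have hA : ∑ i, ∑ j, p i * c i j = 1 := by
      have h10 : ∀ i, ∑ j, p i * c i j = p i := by
        intro i
        rw [← Finset.mul_sum, hrow i, mul_one]
      rw [Finset.sum_congr rfl (fun i _ => h10 i), hps]
    have hB : ∑ i, ∑ j, q j * c i j = 1 := by
      rw [Finset.sum_comm]
      have h10 : ∀ j, ∑ i, q j * c i j = q j := by
        intro j
        rw [← Finset.mul_sum, hcol j, mul_one]
      rw [Finset.sum_congr rfl (fun j _ => h10 j), hqs]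
    have hub : ∑ i, ∑ j, c i j * ((p i + q j) / 2) = 1 := by
      calc ∑ i, ∑ j, c i j * ((p i + q j) / 2)
          = ∑ i, ∑ j, (p i * c i j + q j * c i j) / 2 := by
            exact Finset.sum_congr rfl fun i _ => Finset.sum_congr rfl fun j _ => by ring
        _ = ((∑ i, ∑ j, p i * c i j) + ∑ i, ∑ j, q j * c i j) / 2 := by
            have h11 : ∀ i, ∑ j, (p i * c i j + q j * c i j) / 2
                = ((∑ j, p i * c i j) + ∑ j, q j * c i j) / 2 := by
              intro i
              rw [← Finset.sum_div, Finset.sum_add_distrib]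
            rw [Finset.sum_congr rfl (fun i _ => h11 i), ← Finset.sum_div,
              Finset.sum_add_distrib]
        _ = 1 := by rw [hA, hB]; norm_num
    calc H ≤ ∑ i, ∑ j, c i j * ((p i + q j) / 2) :=
          Finset.sum_le_sum fun i _ => Finset.sum_le_sum fun j _ => hterm i j
      _ = 1 := hub
  -- relEnt value equals Dn / log 2
  have hR2 : (∑ i, p i * f (p i)) - (∑ i, ∑ j, p i * f (q j) * c i j) = Dn / Real.log 2 := by
    have h11 : ∀ i, p i * f (p i) = ∑ j, c i j * (p i * f (p i)) := by
      intro i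
      rw [← Finset.sum_mul, hrow i, one_mul]
    have h12 : ∀ i j, c i j * (p i * f (p i)) - p i * f (q j) * c i j
        = c i j * (p i * (Real.log (p i) - Real.log (q j))) / Real.log 2 := by
      intro i j
      simp only [hf, Real.logb]
      ring
    calc (∑ i, p i * f (p i)) - (∑ i, ∑ j, p i * f (q j) * c i j)
        = ∑ i, ∑ j, (c i j * (p i * f (p i)) - p i * f (q j) * c i j) := by
          rw [Finset.sum_congr rfl (fun i _ => h11 i), ← Finset.sum_sub_distrib]
          exact Finset.sum_congr rfl fun i _ => by rw [← Finset.sum_sub_distrib]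
      _ = ∑ i, ∑ j, c i j * (p i * (Real.log (p i) - Real.log (q j))) / Real.log 2 := by
          exact Finset.sum_congr rfl fun i _ => Finset.sum_congr rfl fun j _ => h12 i j
      _ = Dn / Real.log 2 := by
          rw [hDndef, Finset.sum_div]
          exact Finset.sum_congr rfl fun i _ => (Finset.sum_div _ _ _).symm
  have hlog2pos : (0 : ℝ) < Real.log 2 := Real.log_pos (by norm_num)
  have hDn0 : 0 ≤ Dn := by linarith
  have hS5 : Dn ≤ Dn / Real.log 2 := by
    rw [le_div_iff₀ hlog2pos]
    nlinarith [Real.log_two_lt_d9]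
  -- fidelity side
  have hm : (hρ.sqrt * σ * hρ.sqrt).PosSemidef := by
    have h13 := hσ.mul_mul_conjTranspose_same hρ.sqrt
    rwa [hρ.posSemidef_sqrt.1] at h13
  have hfid : fid ρ σ = ∑ k, Real.sqrt (hm.1.eigenvalues k) := by
    unfold fid
    rw [dif_pos hρ, dif_pos hm]
    exact sqrt_trace_re hm
  set X : Matrix (Fin d) (Fin d) ℂ := hσ.sqrt * hρ.sqrt with hXdef
  have hMX : hρ.sqrt * σ * hρ.sqrt = star X * X := by
    have h14 : star X = hρ.sqrt * hσ.sqrt := by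
      rw [hXdef, Matrix.star_mul, Matrix.star_eq_conjTranspose, Matrix.star_eq_conjTranspose,
        hρ.posSemidef_sqrt.1, hσ.posSemidef_sqrt.1]
    rw [h14, hXdef]
    calc hρ.sqrt * σ * hρ.sqrt
        = hρ.sqrt * (hσ.sqrt * hσ.sqrt) * hρ.sqrt := by rw [hσ.sqrt_mul_self]
      _ = hρ.sqrt * hσ.sqrt * (hσ.sqrt * hρ.sqrt) := by simp only [Matrix.mul_assoc]
  have hHle : X.trace.re ≤ fid ρ σ := by
    rw [hfid]
    exact re_trace_le X _ hm hMX
  have hHeq : X.trace.re = H := by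
    have e : X = V * Matrix.diagonal (fun i => ((Real.sqrt (q i) : ℝ) : ℂ)) * star V *
        (U * Matrix.diagonal (fun i => ((Real.sqrt (p i) : ℝ) : ℂ)) * star U) := rfl
    rw [e, trace_form_re V U (fun i => Real.sqrt (q i)) (fun i => Real.sqrt (p i))]
    have hsVU : star V * U = star W := by rw [hWdef, Matrix.star_mul, star_star]
    rw [hsVU, Finset.sum_comm, hHdef]
    refine Finset.sum_congr rfl fun i _ => Finset.sum_congr rfl fun j _ => ?_
    rw [Matrix.star_apply, Complex.star_def, Complex.normSq_conj, Real.sqrt_mul (hp i)]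
    rw [hcdef]
    ring
  have hHF : H ≤ fid ρ σ := hHeq ▸ hHle
  rw [hsplit, hTe1, hTe2, hR2]
  linarith [hHF, hS2, hS3, hS5]
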